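/- arXiv:2001.02207 — 5 statements merged into one kernel-verified Lean document; each statement's English description precedes it below -/
import Mathlib

section
/- Let D be a well generated triangulated category, let ω be a partial silting object of D, and consider the induced recollement ω^{⊥ℤ} ⇄ D ⇄ Loc(ω) with i_* : ω^{⊥ℤ} → D and j_! : Loc(ω) → D the inclusions. Let σ be a silting object of ω^{⊥ℤ}. Assume that (1) the class (i_*σ)^{⊥>0} ∩ (j_!ω)^{⊥>0} is closed under coproducts in D, and (2) Hom_D(i_*σ, j_!ω[k]) = 0 for all integers k ≥ 2. Let I = Hom_D(i_*σ, j_!ω[1]), let α : (i_*σ)^{(I)} → j_!ω[1] be the canonically induced map, and let σ̃ be the cocone of α, i.e. there is a triangle j_!ω → σ̃ → (i_*σ)^{(I)} --α--> j_!ω[1]. Then σ̃ ⊕ i_*σ is a silting object of D. -/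
/-!
Write `P` for the coproduct of copies of `i_*σ` in the triangle `ω → σ̃ → P → ω[1]`. The long
exact `Hom(-, Z)` sequences of this triangle show that `(σ̃ ⊕ i_*σ)^{⊥>0}` is exactly
`(i_*σ)^{⊥>0} ∩ ω^{⊥>0}`, and likewise for `⊥ℤ`. Hence closure under coproducts is hypothesis (1),
and an object of `(σ̃ ⊕ i_*σ)^{⊥ℤ}` lies in `ω^{⊥ℤ}`, i.e. is some `i_*y`, with `y ∈ σ^{⊥ℤ}`, so it
vanishes. For `σ̃ ⊕ i_*σ ∈ (σ̃ ⊕ i_*σ)^{⊥>0}` the only nontrivial group is `Hom(i_*σ, σ̃[k])`: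
for `k ≥ 2` it vanishes by (2), and for `k = 1` because every map `i_*σ → ω[1]` factors through
`α` by the very choice of `P`.
-/

open CategoryTheory Limits Pretriangulated

universe v u u₁ u₂ u₃

namespace Glue

variable {C : Type u} [Category.{v} C] [Preadditive C]

section Shift
variable [HasShift C ℤ]

/-- `Hom_C(X, Y⟦k⟧) = 0`. -/
def homShiftZero (X Y : C) (k : ℤ) : Prop := ∀ f : X ⟶ Y⟦k⟧, f = 0

/-- `Y ∈ X^{⊥>0}`. -/
def perpGT (X Y : C) : Prop := ∀ k : ℤ, 0 < k → homShiftZero X Y k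

/-- `Y ∈ X^{⊥ℤ}`. -/
def perpZ (X Y : C) : Prop := ∀ k : ℤ, homShiftZero X Y k

/-- `Y ∈ X^{⊥≥0}`. -/
def perpGE (X Y : C) : Prop := ∀ k : ℤ, 0 ≤ k → homShiftZero X Y k

/-- `Y ∈ X^{⊥≤0}`. -/
def perpLE (X Y : C) : Prop := ∀ k : ℤ, k ≤ 0 → homShiftZero X Y k

end Shift

/-- A class of objects is closed under (set-indexed) coproducts. -/
def ClosedUnderCoproducts (S : Set C) : Prop :=
  ∀ (J : Type v) (f : J → C) (c : Cofan f), IsColimit c → (∀ j, f j ∈ S) → c.pt ∈ S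

section Coprod
variable [HasCoproducts.{v} C]

/-- An object is `κ`-small: any map to a coproduct factors through a subcoproduct
with fewer than `κ` terms. -/
def IsKappaSmall (κ : Cardinal.{v}) (X : C) : Prop :=
  ∀ (J : Type v) (Y : J → C) (h : X ⟶ ∐ Y), ∃ Ω : Set J, Cardinal.mk Ω < κ ∧
    ∃ g : X ⟶ ∐ (fun ω : Ω => Y ω.1), h = g ≫ Sigma.desc (fun ω => Sigma.ι Y ω.1)

end Coprod

section WG
variable (C) [HasShift C ℤ] [HasCoproducts.{v} C]

/-- A triangulated category with coproducts is well generated if it admits a set of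
`κ`-small weak generators satisfying the surjectivity condition of Krause. -/
def IsWellGenerated : Prop :=
  ∃ κ : Cardinal.{v}, κ.IsRegular ∧ ∃ S : Set C,
    (∀ X ∈ S, IsKappaSmall κ X) ∧
    (∀ Y : C, (∀ X ∈ S, perpZ X Y) → IsZero Y) ∧
    (∀ (J : Type v) (A B : J → C) (g : ∀ j, A j ⟶ B j),
      (∀ X ∈ S, ∀ j, Function.Surjective (fun f : X ⟶ A j => f ≫ g j)) →
      ∀ X ∈ S, Function.Surjective (fun f : X ⟶ ∐ A => f ≫ Limits.Sigma.map g))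

end WG

section Silting
variable [HasShift C ℤ]

/-- A partial silting object. -/
def IsPartialSilting (σ : C) : Prop :=
  perpGT σ σ ∧ ClosedUnderCoproducts {Y : C | perpGT σ Y}

/-- A silting object. -/
def IsSilting (σ : C) : Prop :=
  IsPartialSilting σ ∧ ∀ Y : C, perpZ σ Y → IsZero Y

/-- A tilting object : silting and `σ^{(J)} ∈ σ^{⊥≠0}` for every set `J`. -/
def IsTilting [HasCoproducts.{v} C] (σ : C) : Prop :=
  IsSilting σ ∧ ∀ (J : Type v) (k : ℤ), k ≠ 0 → homShiftZero σ (∐ (fun _ : J => σ)) k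

end Silting


section Loc
variable [HasZeroObject C] [HasShift C ℤ]
  [∀ n : ℤ, (shiftFunctor C n).Additive] [Pretriangulated C]

/-- A localizing subcategory: a triangulated subcategory closed under coproducts. -/
def IsLocalizingSub (S : Set C) : Prop :=
  (∀ ⦃X Y : C⦄, (X ≅ Y) → X ∈ S → Y ∈ S) ∧
  (∃ Z : C, IsZero Z ∧ Z ∈ S) ∧
  (∀ X ∈ S, ∀ k : ℤ, (X⟦k⟧ : C) ∈ S) ∧
  (∀ T : Triangle C, T ∈ (distTriang C) → T.obj₁ ∈ S → T.obj₃ ∈ S → T.obj₂ ∈ S) ∧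
  (∀ (J : Type v) (f : J → C) (c : Cofan f), IsColimit c → (∀ j, f j ∈ S) → c.pt ∈ S)

/-- `Loc ω` : the smallest localizing subcategory containing `ω`. -/
def Loc (ω : C) : Set C :=
  {X : C | ∀ S : Set C, IsLocalizingSub S → ω ∈ S → X ∈ S}

end Loc

/-- A recollement of triangulated categories. -/
structure Recollement (Y : Type u₁) (D : Type u₂) (X : Type u₃)
    [Category.{v} Y] [Category.{v} D] [Category.{v} X]
    [HasZeroObject Y] [HasZeroObject D] [HasZeroObject X]
    [Preadditive Y] [Preadditive D] [Preadditive X]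
    [HasShift Y ℤ] [HasShift D ℤ] [HasShift X ℤ]
    [∀ n : ℤ, (shiftFunctor Y n).Additive] [∀ n : ℤ, (shiftFunctor D n).Additive]
    [∀ n : ℤ, (shiftFunctor X n).Additive]
    [Pretriangulated Y] [Pretriangulated D] [Pretriangulated X] where
  /-- `i^* : D ⥤ Y` -/
  iStar : D ⥤ Y
  /-- `i_* : Y ⥤ D` -/
  iLow : Y ⥤ D
  /-- `i^! : D ⥤ Y` -/
  iShriek : D ⥤ Y
  /-- `j_! : X ⥤ D` -/
  jShriek : X ⥤ D
  /-- `j^* : D ⥤ X` -/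
  jStar : D ⥤ X
  /-- `j_* : X ⥤ D` -/
  jLow : X ⥤ D
  adj₁ : iStar ⊣ iLow
  adj₂ : iLow ⊣ iShriek
  adj₃ : jShriek ⊣ jStar
  adj₄ : jStar ⊣ jLow
  iLow_full : iLow.Full
  iLow_faithful : iLow.Faithful
  jShriek_full : jShriek.Full
  jShriek_faithful : jShriek.Faithful
  jLow_full : jLow.Full
  jLow_faithful : jLow.Faithful
  jStar_iLow_zero : ∀ y : Y, IsZero (jStar.obj (iLow.obj y))
  iStar_commShift : iStar.CommShift ℤ
  iLow_commShift : iLow.CommShift ℤ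
  iShriek_commShift : iShriek.CommShift ℤ
  jShriek_commShift : jShriek.CommShift ℤ
  jStar_commShift : jStar.CommShift ℤ
  jLow_commShift : jLow.CommShift ℤ
  iStar_triangulated : letI := iStar_commShift; iStar.IsTriangulated
  iLow_triangulated : letI := iLow_commShift; iLow.IsTriangulated
  iShriek_triangulated : letI := iShriek_commShift; iShriek.IsTriangulated
  jShriek_triangulated : letI := jShriek_commShift; jShriek.IsTriangulated
  jStar_triangulated : letI := jStar_commShift; jStar.IsTriangulated
  jLow_triangulated : letI := jLow_commShift; jLow.IsTriangulated

section HomShiftZero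

variable [HasShift C ℤ]

lemma homShiftZero.of_iso [∀ n : ℤ, (shiftFunctor C n).Additive] {W Z Z' : C} {k : ℤ}
    (h : homShiftZero W Z k) (e : Z ≅ Z') : homShiftZero W Z' k := fun _ =>
  (Preadditive.IsIso.comp_right_eq_zero _ (e.inv⟦k⟧')).1 (h _)

lemma homShiftZero_sigma {J : Type v} {A : J → C} [HasCoproduct A] {Z : C} {k : ℤ}
    (h : ∀ j, homShiftZero (A j) Z k) : homShiftZero (∐ A) Z k := fun φ =>
  Sigma.hom_ext _ _ fun j => by rw [h j (Sigma.ι A j ≫ φ), comp_zero]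

lemma homShiftZero.shift [∀ n : ℤ, (shiftFunctor C n).Additive] {A Z : C} {k : ℤ}
    (h : homShiftZero A Z k) (n : ℤ) {k' : ℤ} (hk : k + n = k') :
    homShiftZero (A⟦n⟧) Z k' := fun ψ => by
  obtain ⟨φ, hφ⟩ := (shiftFunctor C n).map_surjective
    (ψ ≫ (shiftFunctorAdd' C k n k' hk).hom.app Z)
  rw [← Preadditive.IsIso.comp_right_eq_zero _ ((shiftFunctorAdd' C k n k' hk).hom.app Z), ← hφ,
    h φ, Functor.map_zero]

variable [HasBinaryBiproducts C]

lemma homShiftZero_biprod_left_iff {A B Z : C} {k : ℤ} :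
    homShiftZero (A ⊞ B) Z k ↔ homShiftZero A Z k ∧ homShiftZero B Z k := by
  refine ⟨fun h => ⟨fun φ => ?_, fun φ => ?_⟩, fun ⟨hA, hB⟩ φ => ?_⟩
  · rw [← biprod.inl_desc φ 0, h (biprod.desc φ 0), comp_zero]
  · rw [← biprod.inr_desc 0 φ, h (biprod.desc 0 φ), comp_zero]
  · exact biprod.hom_ext' _ _ (by rw [hA (biprod.inl ≫ φ), comp_zero])
      (by rw [hB (biprod.inr ≫ φ), comp_zero])

lemma homShiftZero_biprod_right [∀ n : ℤ, (shiftFunctor C n).Additive] {W A B : C} {k : ℤ}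
    (hA : homShiftZero W A k) (hB : homShiftZero W B k) : homShiftZero W (A ⊞ B) k := by
  intro φ
  rw [← Category.comp_id φ, ← (shiftFunctor C k).map_id, ← biprod.total, Functor.map_add,
    Functor.map_comp, Functor.map_comp, Preadditive.comp_add, ← Category.assoc,
    ← Category.assoc, hA (φ ≫ _), hB (φ ≫ _), zero_comp, zero_comp, add_zero]

lemma perpGT_biprod_left_iff {A B Z : C} :
    perpGT (A ⊞ B) Z ↔ perpGT A Z ∧ perpGT B Z := by
  simp only [perpGT, homShiftZero_biprod_left_iff]
  exact ⟨fun h => ⟨fun k hk => (h k hk).1, fun k hk => (h k hk).2⟩,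
    fun h k hk => ⟨h.1 k hk, h.2 k hk⟩⟩

lemma perpZ_biprod_left_iff {A B Z : C} :
    perpZ (A ⊞ B) Z ↔ perpZ A Z ∧ perpZ B Z := by
  simp only [perpZ, homShiftZero_biprod_left_iff]
  exact forall_and

lemma perpGT_biprod_right [∀ n : ℤ, (shiftFunctor C n).Additive] {W A B : C}
    (hA : perpGT W A) (hB : perpGT W B) : perpGT W (A ⊞ B) := fun k hk =>
  homShiftZero_biprod_right (hA k hk) (hB k hk)

end HomShiftZero

section FullyFaithful

variable {C' : Type*} [Category.{v} C'] [Preadditive C'] [HasShift C' ℤ] [HasShift C ℤ]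
  (F : C' ⥤ C) [F.CommShift ℤ] [F.Full] [F.Faithful]

lemma homShiftZero_obj_iff_of_fullyFaithful {x y : C'} {k : ℤ} :
    homShiftZero (F.obj x) (F.obj y) k ↔ homShiftZero x y k := by
  refine ⟨fun h φ => F.map_injective ?_, fun h φ => ?_⟩
  · rw [F.map_zero, ← Preadditive.IsIso.comp_right_eq_zero _ ((F.commShiftIso k).hom.app y)]
    exact h _
  · obtain ⟨ψ, hψ⟩ := F.map_surjective (φ ≫ (F.commShiftIso k).inv.app y)
    rw [← Preadditive.IsIso.comp_right_eq_zero _ ((F.commShiftIso k).inv.app y), ← hψ, h ψ,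
      F.map_zero]

lemma perpGT_sigma_const_obj_of_fullyFaithful [∀ n : ℤ, (shiftFunctor C n).Additive]
    {σ : C'} (hσ : IsPartialSilting σ) (J : Type v)
    [HasCoproduct fun _ : J => σ] [HasCoproduct fun _ : J => F.obj σ]
    [PreservesColimit (Discrete.functor fun _ : J => σ) F] :
    perpGT (F.obj σ) (∐ fun _ : J => F.obj σ) := fun k hk =>
  ((homShiftZero_obj_iff_of_fullyFaithful F).2
    (hσ.2 J _ _ (colimit.isColimit _) (fun _ => hσ.1) k hk)).of_iso (PreservesCoproduct.iso F _)

lemma isZero_of_perpZ_obj_of_isSilting [∀ n : ℤ, (shiftFunctor C n).Additive] {σ y : C'}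
    (hσ : IsSilting σ) {Z : C} (e : F.obj y ≅ Z) (h : perpZ (F.obj σ) Z) : IsZero Z :=
  (F.map_isZero (hσ.2 y fun k =>
    (homShiftZero_obj_iff_of_fullyFaithful F).1 ((h k).of_iso e.symm))).of_iso e.symm

end FullyFaithful

namespace Triangle

variable [HasZeroObject C] [HasShift C ℤ] [∀ n : ℤ, (shiftFunctor C n).Additive]
  [Pretriangulated C] {T : Triangle C} (hT : T ∈ distTriang C)
include hT

lemma homShiftZero_target_obj₂ {W : C} {k : ℤ} (h₁ : homShiftZero W T.obj₁ k)
    (h₃ : homShiftZero W T.obj₃ k) : homShiftZero W T.obj₂ k := fun φ => by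
  obtain ⟨e, rfl⟩ := Triangle.coyoneda_exact₂ _ (T.shift_distinguished hT k) φ (h₃ _)
  exact (h₁ e).symm ▸ zero_comp

lemma homShiftZero_source_obj₂ {Z : C} {k : ℤ} (h₁ : homShiftZero T.obj₁ Z k)
    (h₃ : homShiftZero T.obj₃ Z k) : homShiftZero T.obj₂ Z k := fun φ => by
  obtain ⟨c, rfl⟩ := Triangle.yoneda_exact₂ T hT φ (h₁ _)
  rw [h₃ c, comp_zero]

lemma homShiftZero_source_obj₁ {Z : C} {k : ℤ} (h₂ : homShiftZero T.obj₂ Z k)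
    (h₃ : homShiftZero T.obj₃ Z (k + 1)) : homShiftZero T.obj₁ Z k :=
  homShiftZero_source_obj₂ (inv_rot_of_distTriang T hT) (h₃.shift (-1) (by omega)) h₂

lemma homShiftZero_target_obj₂_one {W : C}
    (hfac : ∀ e : W ⟶ T.obj₁⟦(1 : ℤ)⟧, ∃ u : W ⟶ T.obj₃, e = u ≫ T.mor₃)
    (h₃ : homShiftZero W T.obj₃ 1) : homShiftZero W T.obj₂ 1 := fun φ => by
  obtain ⟨e, rfl⟩ := Triangle.coyoneda_exact₂ _ (T.shift_distinguished hT 1) φ (h₃ _)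
  obtain ⟨u, rfl⟩ := hfac e
  change (u ≫ T.mor₃) ≫ ((1 : ℤ).negOnePow • T.mor₁⟦1⟧') = 0
  rw [Linear.comp_units_smul, Category.assoc, comp_distTriang_mor_zero₃₁ T hT, comp_zero,
    smul_zero]

end Triangle

section Gluing

variable [HasZeroObject C] [HasShift C ℤ] [∀ n : ℤ, (shiftFunctor C n).Additive]
  [Pretriangulated C] [HasBinaryBiproducts C]

lemma perpGT_biprod_iff_of_distTriang {A B s : C} {J : Type v} [HasCoproduct fun _ : J => s]
    {f : A ⟶ B} {g : B ⟶ ∐ fun _ : J => s}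
    {h : (∐ fun _ : J => s) ⟶ A⟦(1 : ℤ)⟧} (hT : Triangle.mk f g h ∈ distTriang C) {Z : C} :
    perpGT (B ⊞ s) Z ↔ perpGT s Z ∧ perpGT A Z := by
  rw [perpGT_biprod_left_iff]
  constructor
  · rintro ⟨hB, hs⟩
    exact ⟨hs, fun k hk => Triangle.homShiftZero_source_obj₁ hT (hB k hk)
      (homShiftZero_sigma fun _ => hs (k + 1) (by omega))⟩
  · rintro ⟨hs, hA⟩
    exact ⟨fun k hk => Triangle.homShiftZero_source_obj₂ hT (hA k hk)
      (homShiftZero_sigma fun _ => hs k hk), hs⟩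

lemma perpZ_biprod_iff_of_distTriang {A B s : C} {J : Type v} [HasCoproduct fun _ : J => s]
    {f : A ⟶ B} {g : B ⟶ ∐ fun _ : J => s}
    {h : (∐ fun _ : J => s) ⟶ A⟦(1 : ℤ)⟧} (hT : Triangle.mk f g h ∈ distTriang C) {Z : C} :
    perpZ (B ⊞ s) Z ↔ perpZ s Z ∧ perpZ A Z := by
  rw [perpZ_biprod_left_iff]
  constructor
  · rintro ⟨hB, hs⟩
    exact ⟨hs, fun k => Triangle.homShiftZero_source_obj₁ hT (hB k)
      (homShiftZero_sigma fun _ => hs (k + 1))⟩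
  · rintro ⟨hs, hA⟩
    exact ⟨fun k => Triangle.homShiftZero_source_obj₂ hT (hA k)
      (homShiftZero_sigma fun _ => hs k), hs⟩

theorem isSilting_biprod_of_distTriang {ω s σt : C}
    [HasCoproduct fun _ : (s ⟶ ω⟦(1 : ℤ)⟧) => s] (f : ω ⟶ σt)
    (g : σt ⟶ ∐ fun _ : (s ⟶ ω⟦(1 : ℤ)⟧) => s)
    (hT : Triangle.mk f g (Sigma.desc fun φ => φ) ∈ distTriang C)
    (hω : perpGT ω ω) (hs : perpGT s s) (hsP : perpGT s (∐ fun _ : (s ⟶ ω⟦(1 : ℤ)⟧) => s))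
    (hωs : perpZ ω s) (hωP : perpZ ω (∐ fun _ : (s ⟶ ω⟦(1 : ℤ)⟧) => s))
    (h1 : ClosedUnderCoproducts {Z : C | perpGT s Z ∧ perpGT ω Z})
    (h2 : ∀ k : ℤ, 2 ≤ k → homShiftZero s ω k)
    (hgen : ∀ Z : C, perpZ s Z → perpZ ω Z → IsZero Z) :
    IsSilting (σt ⊞ s) := by
  have hα : ∀ e : s ⟶ ω⟦(1 : ℤ)⟧,
      ∃ u : s ⟶ ∐ fun _ : (s ⟶ ω⟦(1 : ℤ)⟧) => s, e = u ≫ Sigma.desc fun φ => φ :=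
    fun e => ⟨Sigma.ι (fun _ => s) e, (Sigma.ι_desc (fun φ => φ) e).symm⟩
  have hsσt : perpGT s σt := fun k hk => by
    obtain rfl | hk2 : k = 1 ∨ 2 ≤ k := by omega
    · exact Triangle.homShiftZero_target_obj₂_one hT hα (hsP 1 one_pos)
    · exact Triangle.homShiftZero_target_obj₂ hT (h2 k hk2) (hsP k hk)
  have hωσt : perpGT ω σt := fun k hk => Triangle.homShiftZero_target_obj₂ hT (hω k hk) (hωP k)
  have hperp : {Z : C | perpGT (σt ⊞ s) Z} = {Z : C | perpGT s Z ∧ perpGT ω Z} :=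
    Set.ext fun _ => perpGT_biprod_iff_of_distTriang hT
  refine ⟨⟨(perpGT_biprod_iff_of_distTriang hT).2 ⟨perpGT_biprod_right hsσt hs,
    perpGT_biprod_right hωσt fun k _ => hωs k⟩, hperp ▸ h1⟩, fun Z hZ => ?_⟩
  obtain ⟨hsZ, hωZ⟩ := (perpZ_biprod_iff_of_distTriang hT).1 hZ
  exact hgen Z hsZ hωZ

end Gluing

/-- **Theorem 2.10** (gluing silting objects). -/
theorem gluing_silting_objects
    {Y D X : Type u} [Category.{v} Y] [Category.{v} D] [Category.{v} X]
    [HasZeroObject Y] [HasZeroObject D] [HasZeroObject X]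
    [Preadditive Y] [Preadditive D] [Preadditive X]
    [HasShift Y ℤ] [HasShift D ℤ] [HasShift X ℤ]
    [∀ n : ℤ, (shiftFunctor Y n).Additive] [∀ n : ℤ, (shiftFunctor D n).Additive]
    [∀ n : ℤ, (shiftFunctor X n).Additive]
    [Pretriangulated Y] [Pretriangulated D] [Pretriangulated X]
    [HasCoproducts.{v} Y] [HasCoproducts.{v} D] [HasCoproducts.{v} X]
    [HasBinaryBiproducts D]
    -- `D` is well generated
    (hD : IsWellGenerated D)
    -- `ω` is a partial silting object of `D`
    (ω : D) (hω : IsPartialSilting ω)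
    -- the recollement `ω^{⊥ℤ} ⇄ D ⇄ Loc(ω)` induced by `ω`, with `i_*` and `j_!`
    -- identified with the inclusions of `ω^{⊥ℤ}` and `Loc(ω)` via their essential images
    (R : Recollement Y D X)
    (hIm_i : ∀ d : D, (∃ y : Y, Nonempty (R.iLow.obj y ≅ d)) ↔ perpZ ω d)
    (hIm_j : ∀ d : D, (∃ x : X, Nonempty (R.jShriek.obj x ≅ d)) ↔ d ∈ Loc ω)
    -- `σ` is a silting object of `ω^{⊥ℤ}`
    (σ : Y) (hσ : IsSilting σ)
    -- (1) the class `(i_*σ)^{⊥>0} ∩ (j_!ω)^{⊥>0}` is closed under coproducts in `D`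
    (h1 : ClosedUnderCoproducts {Z : D | perpGT (R.iLow.obj σ) Z ∧ perpGT ω Z})
    -- (2) `Hom_D(i_*σ, j_!ω[k]) = 0` for all `k ≥ 2`
    (h2 : ∀ k : ℤ, 2 ≤ k → homShiftZero (R.iLow.obj σ) ω k)
    -- `σ̃` is the cocone of the canonical map `α : (i_*σ)^{(I)} ⟶ j_!ω[1]`,
    -- where `I = Hom_D(i_*σ, j_!ω[1])`
    (σt : D) (f : ω ⟶ σt)
    (g : σt ⟶ ∐ (fun _ : (R.iLow.obj σ ⟶ ω⟦(1 : ℤ)⟧) => R.iLow.obj σ))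
    (hT : Triangle.mk f g (Sigma.desc fun φ => φ) ∈ distTriang D) :
    -- then `σ̃ ⊕ i_*σ` is a silting object of `D`
    IsSilting (σt ⊞ R.iLow.obj σ) := by
  have := R.iLow_full
  have := R.iLow_faithful
  let := R.iLow_commShift
  have : PreservesColimitsOfSize.{v, v} R.iLow := R.adj₂.leftAdjoint_preservesColimits
  have hω_perp_iLow : ∀ y : Y, perpZ ω (R.iLow.obj y) := fun y => (hIm_i _).1 ⟨y, ⟨Iso.refl _⟩⟩
  refine isSilting_biprod_of_distTriang f g hT hω.1
    (fun k hk => (homShiftZero_obj_iff_of_fullyFaithful R.iLow).2 (hσ.1.1 k hk))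
    (perpGT_sigma_const_obj_of_fullyFaithful R.iLow hσ.1 _) (hω_perp_iLow σ)
    (fun k => (hω_perp_iLow _ k).of_iso (PreservesCoproduct.iso R.iLow _)) h1 h2
    fun Z hσZ hωZ => ?_
  obtain ⟨y, ⟨e⟩⟩ := (hIm_i Z).2 hωZ
  exact isZero_of_perpZ_obj_of_isSilting R.iLow hσ e hσZ

end Glue
end

section
/- Let D be a well generated triangulated category with induced recollement ω^{⊥ℤ} ⇄ D ⇄ Loc(ω) for a partial silting object ω, and let σ be a silting object of ω^{⊥ℤ}. Assume D, Loc(ω) and ω^{⊥ℤ} satisfy dual Brown representability, and let ρ = σ̃ ⊕ i_*σ be the silting object obtained by gluing (σ̃ the cocone of the canonical map α : (i_*σ)^{(I)} → j_!ω[1], I = Hom_D(i_*σ, j_!ω[1]), under hypotheses (1) (i_*σ)^{⊥>0} ∩ (j_!ω)^{⊥>0} closed under coproducts and (2) Hom_D(i_*σ, j_!ω[k]) = 0 for k ≥ 2). Let (Y′, Y″) = (^{⊥0}(σ^{⊥≥0}), σ^{⊥≥0}) and (X′, X″) = (^{⊥0}(ω^{⊥≥0}), ω^{⊥≥0}) be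 the co-t-structures associated to σ and ω in ω^{⊥ℤ} and Loc(ω) respectively, and let (D′, D″) be the co-t-structure obtained by gluing them along the recollement. Then the co-t-structure (^{⊥0}(ρ^{⊥≥0}), ρ^{⊥≥0}) associated to ρ coincides with (D′, D″). -/
open CategoryTheory Limits Pretriangulated

universe v u u₁ u₂ u₃

namespace Glue

variable {C : Type u} [Category.{v} C] [Preadditive C]

/-- Dual Brown representability: the category has products and every covariant
cohomological functor to abelian groups sending products to products is representable. -/
def DualBrownRepresentability (C : Type u) [Category.{v} C] [Preadditive C]
    [HasZeroObject C] [HasShift C ℤ] [∀ n : ℤ, (shiftFunctor C n).Additive]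
    [Pretriangulated C] : Prop :=
  HasProducts.{v} C ∧
  ∀ F : C ⥤ AddCommGrpCat.{v},
    (∀ T : Triangle C, T ∈ (distTriang C) →
      Function.Exact (⇑(F.map T.mor₁)) (⇑(F.map T.mor₂))) →
    (∀ (J : Type v) (f : J → C) (c : Fan f), IsLimit c → Nonempty (IsLimit (F.mapCone c))) →
    (F ⋙ forget AddCommGrpCat).IsCorepresentable

/-!
The class `ρ^{⊥≥0}` is computed summand by summand. By adjunction, `(i_*σ)^{⊥≥0}` consists of
the `Z` with `i^!Z ∈ σ^{⊥≥0}`, and for such `Z` the triangle `j_!ω → σ̃ → (i_*σ)^{(I)} → j_!ω[1]`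
shows that `Z ∈ σ̃^{⊥≥0}` iff `Z ∈ (j_!ω)^{⊥≥0}`, i.e. `j^*Z ∈ ω^{⊥≥0}`. Hence `ρ^{⊥≥0} = D″`.

For the left classes, `i_*` and `j_*` send `σ^{⊥≥0}` and `ω^{⊥≥0}` into `D″`, so the adjunctions
`i^* ⊣ i_*` and `j^* ⊣ j_*` give `^{⊥0}D″ ⊆ D′`. Conversely, for `Z ∈ D′` a map `Z → W` with
`W ∈ D″` vanishes on `j_!j^*Z`, so it factors through the cone of the counit `j_!j^*Z → Z`. That
cone is killed by `j^*`, hence is some `i_*y` (this is where `ω^{⊥ℤ} = i_*(Y)` enters), and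
`y ≅ i^*Z`, so `Hom(i_*y, W) = Hom(i^*Z, i^!W) = 0`.
-/

section HomZero

variable {A : Type u₁} {B : Type u₂} [Category.{v} A] [Category.{v} B]
  [HasZeroMorphisms A] [HasZeroMorphisms B]

def HomZero (X₁ X₂ : A) : Prop := ∀ f : X₁ ⟶ X₂, f = 0

lemma homZero_iff_subsingleton {X₁ X₂ : A} : HomZero X₁ X₂ ↔ Subsingleton (X₁ ⟶ X₂) :=
  ⟨fun h => ⟨fun f g => (h f).trans (h g).symm⟩, fun _ f => Subsingleton.elim f 0⟩

lemma homZero_congr {X₁ X₂ : A} {Y₁ Y₂ : B} (e : (X₁ ⟶ X₂) ≃ (Y₁ ⟶ Y₂)) :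
    HomZero X₁ X₂ ↔ HomZero Y₁ Y₂ := by
  simp only [homZero_iff_subsingleton]
  exact e.subsingleton_congr

lemma homZero_of_isZero_left {X₁ X₂ : A} (h : IsZero X₁) : HomZero X₁ X₂ :=
  fun f => h.eq_of_src f 0

lemma homZero_of_isZero_right {X₁ X₂ : A} (h : IsZero X₂) : HomZero X₁ X₂ :=
  fun f => h.eq_of_tgt f 0

lemma homZero_biprod_iff {X₁ X₂ W : A} [HasBinaryBiproduct X₁ X₂] :
    HomZero (X₁ ⊞ X₂) W ↔ HomZero X₁ W ∧ HomZero X₂ W := by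
  refine ⟨fun h => ⟨fun f => ?_, fun f => ?_⟩, fun ⟨h₁, h₂⟩ f => ?_⟩
  · simpa using congrArg (biprod.inl ≫ ·) (h (biprod.desc f 0))
  · simpa using congrArg (biprod.inr ≫ ·) (h (biprod.desc 0 f))
  · ext
    · simp [h₁ (biprod.inl ≫ f)]
    · simp [h₂ (biprod.inr ≫ f)]

lemma homZero_sigma {J : Type*} {S : J → A} [HasCoproduct S] {W : A}
    (h : ∀ j, HomZero (S j) W) : HomZero (∐ S) W :=
  fun f => Sigma.hom_ext _ _ fun j => by simp [h j (Sigma.ι S j ≫ f)]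

lemma leftOrthogonal_iff_forall {P : ObjectProperty A} {X₁ : A} :
    P.leftOrthogonal X₁ ↔ ∀ W, P W → ∀ f : X₁ ⟶ W, f = 0 :=
  ⟨fun h _ hW f => h f hW, fun h W f hW => h W hW f⟩

end HomZero

section Shift

variable [HasShift C ℤ]

lemma homShiftZero_congr {X₁ X₂ Y₁ Y₂ : C} (e₁ : X₁ ≅ X₂) (e₂ : Y₁ ≅ Y₂) (k : ℤ) :
    homShiftZero X₁ Y₁ k ↔ homShiftZero X₂ Y₂ k :=
  homZero_congr (e₁.homCongr ((shiftFunctor C k).mapIso e₂))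

lemma perpGE_congr {X₁ X₂ Y₁ Y₂ : C} (e₁ : X₁ ≅ X₂) (e₂ : Y₁ ≅ Y₂) :
    perpGE X₁ Y₁ ↔ perpGE X₂ Y₂ :=
  forall₂_congr fun k _ => homShiftZero_congr e₁ e₂ k

lemma perpZ_congr {X₁ X₂ Y₁ Y₂ : C} (e₁ : X₁ ≅ X₂) (e₂ : Y₁ ≅ Y₂) :
    perpZ X₁ Y₁ ↔ perpZ X₂ Y₂ :=
  forall_congr' (homShiftZero_congr e₁ e₂)

lemma homShiftZero_of_isZero [∀ n : ℤ, (shiftFunctor C n).Additive] {X₁ Y₁ : C}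
    (h : IsZero Y₁) (k : ℤ) : homShiftZero X₁ Y₁ k :=
  homZero_of_isZero_right ((shiftFunctor C k).map_isZero h)

lemma perpGE_biprod_iff {X₁ X₂ Z : C} [HasBinaryBiproduct X₁ X₂] :
    perpGE (X₁ ⊞ X₂) Z ↔ perpGE X₁ Z ∧ perpGE X₂ Z :=
  (forall₂_congr fun _ _ => homZero_biprod_iff).trans forall₂_and

instance (X₁ : C) : ObjectProperty.IsClosedUnderIsomorphisms (perpGE X₁) :=
  ⟨fun e h => (perpGE_congr (Iso.refl X₁) e).1 h⟩

open ZeroObject in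
instance [HasZeroObject C] [∀ n : ℤ, (shiftFunctor C n).Additive] (X₁ : C) :
    ObjectProperty.ContainsZero (perpGE X₁) :=
  ⟨⟨0, isZero_zero C, fun k _ => homShiftZero_of_isZero (isZero_zero C) k⟩⟩

end Shift

section Adjunction

variable {A : Type u₁} {B : Type u₂} [Category.{v} A] [Category.{v} B]
  [Preadditive A] [Preadditive B] [HasShift A ℤ] [HasShift B ℤ]
  {F : A ⥤ B} {G : B ⥤ A} (adj : F ⊣ G) [G.CommShift ℤ]
include adj

lemma homShiftZero_obj_iff_of_adj (X₁ : A) (Z : B) (k : ℤ) :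
    homShiftZero (F.obj X₁) Z k ↔ homShiftZero X₁ (G.obj Z) k :=
  (homZero_congr (adj.homEquiv _ _)).trans
    (homZero_congr ((Iso.refl X₁).homCongr ((G.commShiftIso k).app Z)))

lemma perpGE_obj_iff_of_adj (X₁ : A) (Z : B) : perpGE (F.obj X₁) Z ↔ perpGE X₁ (G.obj Z) :=
  forall₂_congr fun k _ => homShiftZero_obj_iff_of_adj adj X₁ Z k

lemma perpZ_obj_iff_of_adj (X₁ : A) (Z : B) : perpZ (F.obj X₁) Z ↔ perpZ X₁ (G.obj Z) :=
  forall_congr' (homShiftZero_obj_iff_of_adj adj X₁ Z)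

end Adjunction

section Triangulated

variable [HasZeroObject C] [HasShift C ℤ] [∀ n : ℤ, (shiftFunctor C n).Additive]
  [Pretriangulated C]

lemma homZero_obj₂_of_distTriang {T : Triangle C} (hT : T ∈ distTriang C) {W : C}
    (h₁ : HomZero T.obj₁ W) (h₃ : HomZero T.obj₃ W) : HomZero T.obj₂ W := fun φ => by
  obtain ⟨ψ, rfl⟩ := Triangle.yoneda_exact₂ T hT φ (h₁ _)
  rw [h₃ ψ, comp_zero]

lemma homZero_obj₁_of_distTriang {T : Triangle C} (hT : T ∈ distTriang C) {W : C}
    (h₂ : HomZero T.obj₂ W) (h₃ : HomZero T.obj₃ (W⟦(1 : ℤ)⟧)) : HomZero T.obj₁ W :=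
  homZero_obj₂_of_distTriang (inv_rot_of_distTriang T hT)
    ((homZero_congr ((shiftEquiv C (1 : ℤ)).symm.toAdjunction.homEquiv _ _)).2 h₃) h₂

lemma perpGE_obj₁_iff_of_distTriang {T : Triangle C} (hT : T ∈ distTriang C) {Z : C}
    (h₃ : perpGE T.obj₃ Z) : perpGE T.obj₁ Z ↔ perpGE T.obj₂ Z := by
  refine ⟨fun h₁ k hk => homZero_obj₂_of_distTriang hT (h₁ k hk) (h₃ k hk),
    fun h₂ k hk => homZero_obj₁_of_distTriang hT (h₂ k hk) ?_⟩
  exact (homZero_congr ((Iso.refl _).homCongr ((shiftFunctorAdd' C k 1 (k + 1) rfl).app Z))).1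
    (h₃ (k + 1) (by omega))

lemma perpGE_biprod_iff_of_distTriang {A B S Z : C} {I : Type*} [HasCoproduct fun _ : I => S]
    [HasBinaryBiproduct B S] {f : A ⟶ B} {g : B ⟶ ∐ fun _ : I => S}
    {h : (∐ fun _ : I => S) ⟶ A⟦(1 : ℤ)⟧} (hT : Triangle.mk f g h ∈ distTriang C) :
    perpGE (B ⊞ S) Z ↔ perpGE A Z ∧ perpGE S Z := by
  rw [perpGE_biprod_iff, and_congr_left_iff]
  intro hS
  exact (perpGE_obj₁_iff_of_distTriang hT fun k hk => homZero_sigma fun _ => hS k hk).symm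

end Triangulated

attribute [local instance] Recollement.iLow_full Recollement.iLow_faithful
  Recollement.jShriek_full Recollement.jShriek_faithful Recollement.jLow_full
  Recollement.jLow_faithful Recollement.iStar_commShift Recollement.iShriek_commShift
  Recollement.jStar_commShift Recollement.iStar_triangulated Recollement.jStar_triangulated

section Recollement

variable {Y : Type u₁} {D : Type u₂} {X : Type u₃} [Category.{v} Y] [Category.{v} D]
  [Category.{v} X] [HasZeroObject Y] [HasZeroObject D] [HasZeroObject X]
  [Preadditive Y] [Preadditive D] [Preadditive X] [HasShift Y ℤ] [HasShift D ℤ] [HasShift X ℤ]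
  [∀ n : ℤ, (shiftFunctor Y n).Additive] [∀ n : ℤ, (shiftFunctor D n).Additive]
  [∀ n : ℤ, (shiftFunctor X n).Additive] [Pretriangulated Y] [Pretriangulated D]
  [Pretriangulated X] (R : Recollement Y D X)

lemma Recollement.isZero_iShriek_jLow (x : X) : IsZero (R.iShriek.obj (R.jLow.obj x)) := by
  rw [IsZero.iff_id_eq_zero]
  exact (homZero_congr ((R.adj₂.homEquiv _ _).symm.trans (R.adj₄.homEquiv _ _).symm)).2
    (homZero_of_isZero_left (R.jStar_iLow_zero _)) _

lemma Recollement.isZero_iStar_jShriek (x : X) : IsZero (R.iStar.obj (R.jShriek.obj x)) := by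
  rw [IsZero.iff_id_eq_zero]
  exact (homZero_congr ((R.adj₁.homEquiv _ _).trans (R.adj₃.homEquiv _ _))).2
    (homZero_of_isZero_right (R.jStar_iLow_zero _)) _

lemma Recollement.exists_distTriang_jShriek_jStar
    (hker : ∀ d : D, IsZero (R.jStar.obj d) → R.iLow.essImage d) (Z : D) :
    ∃ (C₀ : D) (u : Z ⟶ C₀) (w : C₀ ⟶ (R.jShriek.obj (R.jStar.obj Z))⟦(1 : ℤ)⟧) (y : Y),
      Triangle.mk (R.adj₃.counit.app Z) u w ∈ distTriang D ∧
        Nonempty (R.iLow.obj y ≅ C₀) ∧ Nonempty (R.iStar.obj Z ≅ y) := by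
  obtain ⟨C₀, u, w, hT⟩ := distinguished_cocone_triangle (R.adj₃.counit.app Z)
  obtain ⟨y, ⟨e⟩⟩ := hker C₀ (Triangle.isZero₃_of_isIso₁ _ (R.jStar.map_distinguished _ hT)
    (inferInstanceAs (IsIso (R.jStar.map (R.adj₃.counit.app Z)))))
  have : IsIso (R.iStar.map u) := (Triangle.isZero₁_iff_isIso₂ _
    (R.iStar.map_distinguished _ hT)).1 (R.isZero_iStar_jShriek _)
  exact ⟨C₀, u, w, y, hT, ⟨e⟩,
    ⟨asIso (R.iStar.map u) ≪≫ R.iStar.mapIso e.symm ≪≫ asIso (R.adj₁.counit.app y)⟩⟩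

lemma Recollement.leftOrthogonal_glued_iff
    (hker : ∀ d : D, IsZero (R.jStar.obj d) → R.iLow.essImage d)
    (P : ObjectProperty Y) (Q : ObjectProperty X) [P.IsClosedUnderIsomorphisms] [P.ContainsZero]
    [Q.IsClosedUnderIsomorphisms] [Q.ContainsZero] (Z : D) :
    (P.inverseImage R.iShriek ⊓ Q.inverseImage R.jStar).leftOrthogonal Z ↔
      P.leftOrthogonal (R.iStar.obj Z) ∧ Q.leftOrthogonal (R.jStar.obj Z) := by
  refine ⟨fun hZ => ⟨fun W φ hW => ?_, fun W φ hW => ?_⟩, fun ⟨hi, hj⟩ W φ ⟨hW₁, hW₂⟩ => ?_⟩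
  · have hW' : (P.inverseImage R.iShriek ⊓ Q.inverseImage R.jStar) (R.iLow.obj W) :=
      ⟨P.prop_of_iso (asIso (R.adj₂.unit.app W)) hW, Q.prop_of_isZero (R.jStar_iLow_zero W)⟩
    exact (homZero_congr (R.adj₁.homEquiv Z W)).2 (fun f => hZ f hW') φ
  · have hW' : (P.inverseImage R.iShriek ⊓ Q.inverseImage R.jStar) (R.jLow.obj W) :=
      ⟨P.prop_of_isZero (R.isZero_iShriek_jLow W),
        Q.prop_of_iso (asIso (R.adj₄.counit.app W)).symm hW⟩
    exact (homZero_congr (R.adj₄.homEquiv Z W)).2 (fun f => hZ f hW') φ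
  · obtain ⟨C₀, u, w, y, hT, ⟨e₀⟩, ⟨e⟩⟩ := R.exists_distTriang_jShriek_jStar hker Z
    obtain ⟨ψ, rfl⟩ := Triangle.yoneda_exact₂ _ hT φ
      ((homZero_congr (R.adj₃.homEquiv _ _)).2 (fun f => hj f hW₂) _)
    have hψ : HomZero C₀ W :=
      (homZero_congr (e₀.symm.homCongr (Iso.refl W) |>.trans (R.adj₂.homEquiv _ _) |>.trans
        (e.symm.homCongr (Iso.refl _)))).2 fun f => hi f hW₁
    change u ≫ ψ = 0
    rw [hψ ψ, comp_zero]

lemma Recollement.perpGE_biprod_iLow_eq {ωX : X} {ω σt : D} (eω : R.jShriek.obj ωX ≅ ω) {σ : Y}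
    {I : Type*} [HasCoproduct fun _ : I => R.iLow.obj σ] [HasBinaryBiproduct σt (R.iLow.obj σ)]
    {f : ω ⟶ σt} {g : σt ⟶ ∐ fun _ : I => R.iLow.obj σ}
    {h : (∐ fun _ : I => R.iLow.obj σ) ⟶ ω⟦(1 : ℤ)⟧} (hT : Triangle.mk f g h ∈ distTriang D) :
    perpGE (σt ⊞ R.iLow.obj σ) =
      ObjectProperty.inverseImage (perpGE σ) R.iShriek ⊓
        ObjectProperty.inverseImage (perpGE ωX) R.jStar := by
  ext Z
  rw [perpGE_biprod_iff_of_distTriang hT, and_comm, ObjectProperty.prop_inf_iff,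
    perpGE_congr eω.symm (Iso.refl Z)]
  exact and_congr (perpGE_obj_iff_of_adj R.adj₂ σ Z) (perpGE_obj_iff_of_adj R.adj₃ ωX Z)

end Recollement

/-- **Theorem 2.14**: the gluing of silting objects is compatible with the gluing of
co-t-structures. -/
theorem glued_silting_co_t_structure
    {Y D X : Type u} [Category.{v} Y] [Category.{v} D] [Category.{v} X]
    [HasZeroObject Y] [HasZeroObject D] [HasZeroObject X]
    [Preadditive Y] [Preadditive D] [Preadditive X]
    [HasShift Y ℤ] [HasShift D ℤ] [HasShift X ℤ]
    [∀ n : ℤ, (shiftFunctor Y n).Additive] [∀ n : ℤ, (shiftFunctor D n).Additive]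
    [∀ n : ℤ, (shiftFunctor X n).Additive]
    [Pretriangulated Y] [Pretriangulated D] [Pretriangulated X]
    [HasCoproducts.{v} Y] [HasCoproducts.{v} D] [HasCoproducts.{v} X]
    [HasBinaryBiproducts D]
    -- `D` is well generated
    (hD : IsWellGenerated D)
    -- `D`, `Loc(ω)` and `ω^{⊥ℤ}` satisfy dual Brown representability
    (hBrY : DualBrownRepresentability Y) (hBrD : DualBrownRepresentability D)
    (hBrX : DualBrownRepresentability X)
    -- `ω` is a partial silting object of `D`
    (ω : D) (hω : IsPartialSilting ω)
    -- the recollement `ω^{⊥ℤ} ⇄ D ⇄ Loc(ω)` induced by `ω`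
    (R : Recollement Y D X)
    (hIm_i : ∀ d : D, (∃ y : Y, Nonempty (R.iLow.obj y ≅ d)) ↔ perpZ ω d)
    (hIm_j : ∀ d : D, (∃ x : X, Nonempty (R.jShriek.obj x ≅ d)) ↔ d ∈ Loc ω)
    -- `ω` viewed as an object of `Loc(ω)`
    (ωX : X) (hωX : Nonempty (R.jShriek.obj ωX ≅ ω))
    -- `σ` is a silting object of `ω^{⊥ℤ}`
    (σ : Y) (hσ : IsSilting σ)
    -- (1) `(i_*σ)^{⊥>0} ∩ (j_!ω)^{⊥>0}` is closed under coproducts in `D`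
    (h1 : ClosedUnderCoproducts {Z : D | perpGT (R.iLow.obj σ) Z ∧ perpGT ω Z})
    -- (2) `Hom_D(i_*σ, j_!ω[k]) = 0` for all `k ≥ 2`
    (h2 : ∀ k : ℤ, 2 ≤ k → homShiftZero (R.iLow.obj σ) ω k)
    -- `σ̃` is the cocone of the canonical map `α : (i_*σ)^{(I)} ⟶ j_!ω[1]`
    (σt : D) (f : ω ⟶ σt)
    (g : σt ⟶ ∐ (fun _ : (R.iLow.obj σ ⟶ ω⟦(1 : ℤ)⟧) => R.iLow.obj σ))
    (hT : Triangle.mk f g (Sigma.desc fun φ => φ) ∈ distTriang D) :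
    -- then, for the glued silting object `ρ = σ̃ ⊕ i_*σ`, the co-t-structure
    -- `(^{⊥0}(ρ^{⊥≥0}), ρ^{⊥≥0})` coincides with the glued co-t-structure `(D′, D″)`:
    ({Z : D | ∀ W : D, perpGE (σt ⊞ R.iLow.obj σ) W → ∀ φ : Z ⟶ W, φ = 0}
        = {Z : D |
            (∀ W : Y, perpGE σ W → ∀ φ : R.iStar.obj Z ⟶ W, φ = 0) ∧
            (∀ W : X, perpGE ωX W → ∀ φ : R.jStar.obj Z ⟶ W, φ = 0)}) ∧
    ({Z : D | perpGE (σt ⊞ R.iLow.obj σ) Z}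
        = {Z : D | perpGE σ (R.iShriek.obj Z) ∧ perpGE ωX (R.jStar.obj Z)}) := by
  obtain ⟨eω⟩ := hωX
  have hρ := R.perpGE_biprod_iLow_eq eω hT
  have hker : ∀ d : D, IsZero (R.jStar.obj d) → R.iLow.essImage d := fun d hd =>
    (hIm_i d).2 <| (perpZ_congr eω (Iso.refl d)).1 <|
      (perpZ_obj_iff_of_adj R.adj₃ ωX d).2 fun k => homShiftZero_of_isZero hd k
  refine ⟨Set.ext fun Z => ?_, Set.ext fun Z => iff_of_eq (congrFun hρ Z)⟩
  have hglued := R.leftOrthogonal_glued_iff hker (perpGE σ) (perpGE ωX) Z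
  rw [← hρ] at hglued
  exact leftOrthogonal_iff_forall.symm.trans <|
    hglued.trans (and_congr leftOrthogonal_iff_forall leftOrthogonal_iff_forall)

end Glue
end

section
/- Let σ₁, σ₂ be objects of a triangulated category D such that Hom_D(σ₁, σ₁[k]) = 0 and Hom_D(σ₂, σ₂[k]) = 0 for all k > 0, and assume (A1) Hom_D(σ₁, σ₂[k]) = 0 for all k ≥ 0 and (A2) Hom_D(σ₂, σ₁[k]) = 0 for all k ≥ 2. Given a morphism α : σ₂ → σ₁[1], let σ̃ be defined by a triangle σ₁ → σ̃ → σ₂ --α--> σ₁[1]. Then Hom_D(σ̃, σ̃[k]) = 0 for all k > 0 if and only if the homomorphism φ : Hom_D(σ₂, σ₂) ⊕ Hom_D(σ₁[1], σ₁[1]) → Hom_D(σ₂, σ₁[1]) defined by φ(f, g) = α ∘ f + g ∘ α is surjective. -/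
open CategoryTheory Limits Pretriangulated

universe v u u₁ u₂ u₃

namespace Glue

variable {C : Type u} [Category.{v} C] [Preadditive C]

/-!
Hom(σ₁, σ̃[k]) vanishes for `k > 0` and Hom(σ₂, σ̃[k]) for `k ≥ 2`, since σ̃ is an extension
of σ₁ and σ₂; hence only `k = 1` matters. There, every map σ̃ → σ̃[1] factors as
`b ≫ β ≫ a[1]` with `β : σ₂ → σ₁[1]`, and such a composite vanishes exactly when `β` lies in
the image of `φ`: the image of `φ` is killed because `b ≫ α = 0 = α ≫ a[1]`, and conversely,
using Hom(σ₁, σ₂) = 0, a vanishing composite lets one peel off `α ≫ e[1]` and then `f ≫ α`.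
-/

lemma homShiftZero_zero_iff [HasShift C ℤ] (X Y : C) :
    homShiftZero X Y 0 ↔ ∀ f : X ⟶ Y, f = 0 := by
  let e := (shiftFunctorZero C ℤ).app Y
  refine ⟨fun h f => ?_, fun h f => ?_⟩
  · simpa using congrArg (· ≫ e.hom) (h (f ≫ e.inv))
  · simpa using congrArg (· ≫ e.inv) (h (f ≫ e.hom))

section Triangle

variable [HasZeroObject C] [HasShift C ℤ] [∀ n : ℤ, (shiftFunctor C n).Additive]
  [Pretriangulated C] {X Y Z : C} {a : X ⟶ Y} {b : Y ⟶ Z} {c : Z ⟶ X⟦(1 : ℤ)⟧}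

/-- Exactness of the `k`-th shift of the triangle, whose signs `(-1)^k` are absorbed into `g`. -/
lemma coyoneda_exact₂_shift (hT : Triangle.mk a b c ∈ distTriang C) {k : ℤ} {W : C}
    (u : W ⟶ Y⟦k⟧) (hu : u ≫ b⟦k⟧' = 0) : ∃ g : W ⟶ X⟦k⟧, u = g ≫ a⟦k⟧' := by
  obtain ⟨g, hg⟩ : ∃ g : W ⟶ X⟦k⟧, u = g ≫ (k.negOnePow • a⟦k⟧') :=
    Triangle.coyoneda_exact₂ _ (Triangle.shift_distinguished _ hT k) u
    (show u ≫ (k.negOnePow • b⟦k⟧') = 0 by rw [Linear.comp_units_smul, hu, smul_zero])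
  exact ⟨k.negOnePow • g, by rwa [Linear.units_smul_comp, ← Linear.comp_units_smul]⟩

lemma homShiftZero_to_extension (hT : Triangle.mk a b c ∈ distTriang C) {W : C} {k : ℤ}
    (hX : homShiftZero W X k) (hZ : homShiftZero W Z k) : homShiftZero W Y k := fun u => by
  obtain ⟨g, rfl⟩ := coyoneda_exact₂_shift hT u (hZ _)
  rw [hX g, zero_comp]

lemma homShiftZero_from_extension (hT : Triangle.mk a b c ∈ distTriang C) {W : C}
    {k : ℤ} (hX : homShiftZero X W k) (hZ : homShiftZero Z W k) : homShiftZero Y W k := fun u => by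
  obtain ⟨g, rfl⟩ := Triangle.yoneda_exact₂ _ hT u (hX _)
  exact (congrArg _ (hZ g)).trans comp_zero

lemma exists_eq_mor₂_comp_comp_shift_mor₁ (hT : Triangle.mk a b c ∈ distTriang C)
    (hXY : homShiftZero X Y 1) (hZZ : homShiftZero Z Z 1) (f : Y ⟶ Y⟦(1 : ℤ)⟧) :
    ∃ β : Z ⟶ X⟦(1 : ℤ)⟧, f = b ≫ β ≫ a⟦(1 : ℤ)⟧' := by
  obtain ⟨h, rfl⟩ := Triangle.yoneda_exact₂ _ hT f (hXY _)
  obtain ⟨β, rfl⟩ := coyoneda_exact₂_shift hT h (hZZ _)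
  exact ⟨β, rfl⟩

lemma mor₂_comp_comp_shift_mor₁_eq_zero (hT : Triangle.mk a b c ∈ distTriang C)
    (f : Z ⟶ Z) (g : X⟦(1 : ℤ)⟧ ⟶ X⟦(1 : ℤ)⟧) : b ≫ (f ≫ c + c ≫ g) ≫ a⟦(1 : ℤ)⟧' = 0 := by
  have hbc : b ≫ c = 0 := comp_distTriang_mor_zero₂₃ _ hT
  have hca : c ≫ a⟦(1 : ℤ)⟧' = 0 := comp_distTriang_mor_zero₃₁ _ hT
  simp [reassoc_of% hbc, hca]

lemma exists_add_eq_of_mor₂_comp_comp_shift_mor₁_eq_zero (hT : Triangle.mk a b c ∈ distTriang C)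
    (hXZ : ∀ g : X ⟶ Z, g = 0) (β : Z ⟶ X⟦(1 : ℤ)⟧) (hβ : b ≫ β ≫ a⟦(1 : ℤ)⟧' = 0) :
    ∃ (f : Z ⟶ Z) (g : X⟦(1 : ℤ)⟧ ⟶ X⟦(1 : ℤ)⟧), f ≫ c + c ≫ g = β := by
  obtain ⟨g₁, hg₁⟩ := Triangle.yoneda_exact₃ _ hT _ hβ
  obtain ⟨g, rfl⟩ := (shiftFunctor C (1 : ℤ)).map_surjective g₁
  obtain ⟨e, rfl⟩ : ∃ e : X ⟶ X, g = e ≫ a := Triangle.coyoneda_exact₂ _ hT g (hXZ _)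
  have : (β - c ≫ e⟦(1 : ℤ)⟧') ≫ a⟦(1 : ℤ)⟧' = 0 := by
    simp only [Preadditive.sub_comp, Category.assoc, ← Functor.map_comp]
    exact sub_eq_zero.2 hg₁
  obtain ⟨f, hf⟩ : ∃ f : Z ⟶ Z, β - c ≫ e⟦(1 : ℤ)⟧' = f ≫ c :=
    Triangle.coyoneda_exact₁ _ hT _ this
  exact ⟨f, e⟦(1 : ℤ)⟧', by rw [← hf, sub_add_cancel]⟩

end Triangle

/-- **Proposition 2.3**: the cocone `σ̃` of `α : σ₂ ⟶ σ₁[1]` has no positive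
self-extensions if and only if the map `φ(f, g) = α ∘ f + g ∘ α` is surjective. -/
theorem cocone_self_orthogonal_iff
    {D : Type u} [Category.{v} D] [Preadditive D] [HasZeroObject D] [HasShift D ℤ]
    [∀ n : ℤ, (shiftFunctor D n).Additive] [Pretriangulated D]
    (σ₁ σ₂ : D)
    (hσ₁ : ∀ k : ℤ, 0 < k → homShiftZero σ₁ σ₁ k)
    (hσ₂ : ∀ k : ℤ, 0 < k → homShiftZero σ₂ σ₂ k)
    (hA1 : ∀ k : ℤ, 0 ≤ k → homShiftZero σ₁ σ₂ k)
    (hA2 : ∀ k : ℤ, 2 ≤ k → homShiftZero σ₂ σ₁ k)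
    (α : σ₂ ⟶ σ₁⟦(1 : ℤ)⟧)
    (σt : D) (a : σ₁ ⟶ σt) (b : σt ⟶ σ₂)
    (hT : Triangle.mk a b α ∈ distTriang D) :
    (∀ k : ℤ, 0 < k → homShiftZero σt σt k) ↔
      Function.Surjective
        (fun p : (σ₂ ⟶ σ₂) × (σ₁⟦(1 : ℤ)⟧ ⟶ σ₁⟦(1 : ℤ)⟧) =>
          (p.1 ≫ α + α ≫ p.2 : σ₂ ⟶ σ₁⟦(1 : ℤ)⟧)) := by
  have hσ₁σt : ∀ k : ℤ, 0 < k → homShiftZero σ₁ σt k := fun k hk =>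
    homShiftZero_to_extension hT (hσ₁ k hk) (hA1 k hk.le)
  constructor
  · intro hσt β
    obtain ⟨f, g, hfg⟩ := exists_add_eq_of_mor₂_comp_comp_shift_mor₁_eq_zero hT
      ((homShiftZero_zero_iff σ₁ σ₂).1 (hA1 0 le_rfl)) β (hσt 1 one_pos _)
    exact ⟨(f, g), hfg⟩
  · intro hφ k hk
    obtain rfl | hk : k = 1 ∨ 2 ≤ k := by omega
    · intro u
      obtain ⟨β, rfl⟩ :=
        exists_eq_mor₂_comp_comp_shift_mor₁ hT (hσ₁σt 1 one_pos) (hσ₂ 1 one_pos) u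
      obtain ⟨⟨f, g⟩, rfl⟩ := hφ β
      exact mor₂_comp_comp_shift_mor₁_eq_zero hT f g
    · have hσ₂σt : homShiftZero σ₂ σt k :=
        homShiftZero_to_extension hT (hA2 k hk) (hσ₂ k (by omega))
      exact homShiftZero_from_extension hT (hσ₁σt k (by omega)) hσ₂σt

end Glue
end

section
/- Let R be a ring and let σ be a 2-term complex in K^b(Proj R) (a complex of projective right R-modules concentrated in degrees −1 and 0) with T = H^0(σ). Then, in the unbounded derived category D(R), the class σ^{⊥>0} = {Y ∈ D(R) : Hom_{D(R)}(σ, Y[i]) = 0 for all i > 0} equals the class of complexes X with H^0(X) ∈ D_σ and H^i(X) ∈ Y_σ for all i ≥ 1. -/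
/-!
A two-term complex of projectives is K-projective, so a morphism `Q.obj σ ⟶ Z⟦i⟧` is the
homotopy class of a chain map `σ ⟶ K⟦i⟧`, where `K` represents `Z`. A null-homotopy of a chain
map `σ ⟶ C` is a pair `σ⁰ ⟶ C⁻¹`, `σ⁻¹ ⟶ C⁻²`, and building or exploiting one amounts to lifting
maps out of the projectives `σ⁰`, `σ⁻¹` along `Zʲ(C) ⟶ Hʲ(C)` and `Cʲ⁻¹ ⟶ Zʲ(C)`. The upshot:
every chain map `σ ⟶ C` is null-homotopic iff `d ≫ - : Hom(σ⁰, H⁰ C) ⟶ Hom(σ⁻¹, H⁰ C)` is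
injective and `d ≫ - : Hom(σ⁰, H⁻¹ C) ⟶ Hom(σ⁻¹, H⁻¹ C)` is surjective. For `C = K⟦i⟧` and all
`i > 0` this is injectivity at `Hⁱ(K)` and surjectivity at `Hⁱ⁻¹(K)`, i.e. `H⁰ ∈ D_σ` and
`Hⁱ ∈ Y_σ` for `i ≥ 1`.
-/

open CategoryTheory Limits Pretriangulated

universe u

namespace Glue

noncomputable section

variable (R : Type u) [Ring R]

instance hasDerivedCategoryModule : HasDerivedCategory (ModuleCat.{u} R) :=
  HasDerivedCategory.standard _

variable {R}

/-- A 2-term complex of projectives: a cochain complex of projective modules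
concentrated in degrees `-1` and `0`. -/
def TwoTermProj (σ : CochainComplex (ModuleCat.{u} R) ℤ) : Prop :=
  (∀ n : ℤ, Projective (σ.X n)) ∧ (∀ n : ℤ, n ≠ -1 → n ≠ 0 → IsZero (σ.X n))

/-- The class `D_σ` of modules `M` such that `Hom_R(σ, M)` is surjective. -/
def Dclass (σ : CochainComplex (ModuleCat.{u} R) ℤ) : Set (ModuleCat.{u} R) :=
  {M | Function.Surjective (fun φ : σ.X 0 ⟶ M => σ.d (-1) 0 ≫ φ)}

/-- The class `Y_σ` of modules `M` such that `Hom_R(σ, M)` is bijective. -/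
def Yclass (σ : CochainComplex (ModuleCat.{u} R) ℤ) : Set (ModuleCat.{u} R) :=
  {M | Function.Bijective (fun φ : σ.X 0 ⟶ M => σ.d (-1) 0 ≫ φ)}

section TwoTerm

variable {V : Type*} [Category V]

lemma precomp_eq_homCongr_comp {A B M N : V} (d : A ⟶ B) (e : M ≅ N) :
    (fun φ : B ⟶ N => d ≫ φ) =
      (Iso.refl A).homCongr e ∘ (fun φ : B ⟶ M => d ≫ φ) ∘ ((Iso.refl B).homCongr e).symm := by
  ext φ
  simp

variable [Abelian V]

lemma exists_comp_toCycles_eq {ι : Type*} {c : ComplexShape ι} (C : HomologicalComplex V c)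
    (i j : ι) (hij : c.prev j = i) {P : V} [Projective P] (z : P ⟶ C.cycles j)
    (hz : z ≫ C.homologyπ j = 0) : ∃ h : P ⟶ C.X i, h ≫ C.toCycles i j = z := by
  have hE : (ShortComplex.mk _ _ (C.toCycles_comp_homologyπ i j)).Exact :=
    ShortComplex.exact_of_g_is_cokernel _ (C.homologyIsCokernel i j hij)
  exact ⟨hE.liftFromProjective z hz, hE.liftFromProjective_comp z hz⟩

variable {σ C : CochainComplex V ℤ} (hσ : ∀ n : ℤ, n ≠ -1 → n ≠ 0 → IsZero (σ.X n))
include hσ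

def homMkOfTwoTerm (f₀ : σ.X 0 ⟶ C.X 0) (f₁ : σ.X (-1) ⟶ C.X (-1))
    (comm : f₁ ≫ C.d (-1) 0 = σ.d (-1) 0 ≫ f₀) (hf₀ : f₀ ≫ C.d 0 1 = 0) : σ ⟶ C where
  f i :=
    if h : i = 0 then (σ.XIsoOfEq h).hom ≫ f₀ ≫ (C.XIsoOfEq h).inv
    else if h' : i = -1 then (σ.XIsoOfEq h').hom ≫ f₁ ≫ (C.XIsoOfEq h').inv
    else 0
  comm' i j hij := by
    change i + 1 = j at hij
    by_cases h₀ : i = 0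
    · obtain rfl : j = 1 := by omega
      subst h₀
      simp [hf₀]
    by_cases h₁ : i = -1
    · obtain rfl : j = 0 := by omega
      subst h₁
      simp [comm]
    by_cases h₂ : i = -2
    · obtain rfl : j = -1 := by omega
      subst h₂
      simpa using (hσ (-2) (by omega) (by omega)).eq_of_src _ _
    · rw [dif_neg h₀, dif_neg h₁, dif_neg (by omega), dif_neg (by omega), zero_comp, comp_zero]

@[simp]
lemma homMkOfTwoTerm_f_zero (f₀ : σ.X 0 ⟶ C.X 0) (f₁ : σ.X (-1) ⟶ C.X (-1)) (comm) (hf₀) :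
    (homMkOfTwoTerm hσ f₀ f₁ comm hf₀).f 0 = f₀ := by
  simp [homMkOfTwoTerm]

@[simp]
lemma homMkOfTwoTerm_f_neg_one (f₀ : σ.X 0 ⟶ C.X 0) (f₁ : σ.X (-1) ⟶ C.X (-1)) (comm) (hf₀) :
    (homMkOfTwoTerm hσ f₀ f₁ comm hf₀).f (-1) = f₁ := by
  simp [homMkOfTwoTerm]

def nullHomotopyOfTwoTerm (f : σ ⟶ C) (h₀ : σ.X 0 ⟶ C.X (-1)) (h₁ : σ.X (-1) ⟶ C.X (-2))
    (hf₀ : f.f 0 = h₀ ≫ C.d (-1) 0)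
    (hf₁ : f.f (-1) = σ.d (-1) 0 ≫ h₀ + h₁ ≫ C.d (-2) (-1)) : Homotopy f 0 where
  hom i j :=
    if h : i = 0 ∧ j = -1 then (σ.XIsoOfEq h.1).hom ≫ h₀ ≫ (C.XIsoOfEq h.2).inv
    else if h' : i = -1 ∧ j = -2 then (σ.XIsoOfEq h'.1).hom ≫ h₁ ≫ (C.XIsoOfEq h'.2).inv
    else 0
  zero i j hij := by
    change ¬ j + 1 = i at hij
    rw [dif_neg (by omega), dif_neg (by omega)]
  comm i := by
    by_cases hi₀ : i = 0
    · subst hi₀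
      rw [dNext_eq _ (show (ComplexShape.up ℤ).Rel 0 1 by simp),
        prevD_eq _ (show (ComplexShape.up ℤ).Rel (-1) 0 by simp)]
      simp [hf₀]
    by_cases hi₁ : i = -1
    · subst hi₁
      rw [dNext_eq _ (show (ComplexShape.up ℤ).Rel (-1) 0 by simp),
        prevD_eq _ (show (ComplexShape.up ℤ).Rel (-2) (-1) by simp)]
      simp [hf₁]
    · exact (hσ i hi₁ hi₀).eq_of_src _ _

lemma nonempty_homotopy_zero_iff_of_twoTerm (f : σ ⟶ C) :
    Nonempty (Homotopy f 0) ↔ ∃ (h₀ : σ.X 0 ⟶ C.X (-1)) (h₁ : σ.X (-1) ⟶ C.X (-2)),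
      f.f 0 = h₀ ≫ C.d (-1) 0 ∧ f.f (-1) = σ.d (-1) 0 ≫ h₀ + h₁ ≫ C.d (-2) (-1) := by
  refine ⟨fun ⟨H⟩ => ⟨H.hom 0 (-1), H.hom (-1) (-2), ?_, ?_⟩,
    fun ⟨h₀, h₁, hf₀, hf₁⟩ => ⟨nullHomotopyOfTwoTerm hσ f h₀ h₁ hf₀ hf₁⟩⟩
  · have := H.comm 0
    rw [dNext_eq _ (show (ComplexShape.up ℤ).Rel 0 1 by simp),
      prevD_eq _ (show (ComplexShape.up ℤ).Rel (-1) 0 by simp),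
      (hσ 1 (by omega) (by omega)).eq_of_tgt (σ.d 0 1) 0] at this
    simpa using this
  · have := H.comm (-1)
    rw [dNext_eq _ (show (ComplexShape.up ℤ).Rel (-1) 0 by simp),
      prevD_eq _ (show (ComplexShape.up ℤ).Rel (-2) (-1) by simp)] at this
    simpa using this

lemma injective_precomp_homology_zero_of_forall_homotopy_zero
    [Projective (σ.X 0)] [Projective (σ.X (-1))]
    (hnull : ∀ f : σ ⟶ C, Nonempty (Homotopy f 0)) :
    Function.Injective (fun φ : σ.X 0 ⟶ C.homology 0 => σ.d (-1) 0 ≫ φ) := by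
  refine (injective_iff_map_eq_zero (Preadditive.leftComp _ (σ.d (-1) 0))).2
    fun φ (hφ : σ.d (-1) 0 ≫ φ = 0) => ?_
  obtain ⟨u, rfl⟩ : ∃ u, u ≫ C.homologyπ 0 = φ :=
    ⟨Projective.factorThru φ _, Projective.factorThru_comp _ _⟩
  obtain ⟨v, hv⟩ :=
    exists_comp_toCycles_eq C (-1) 0 (by simp) (σ.d (-1) 0 ≫ u) (by simpa using hφ)
  have comm : v ≫ C.d (-1) 0 = σ.d (-1) 0 ≫ u ≫ C.iCycles 0 := by
    rw [← C.toCycles_i, reassoc_of% hv]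
  obtain ⟨h₀, -, hf₀, -⟩ := (nonempty_homotopy_zero_iff_of_twoTerm hσ _).1
    (hnull (homMkOfTwoTerm hσ _ v comm (by simp)))
  have hu : u = h₀ ≫ C.toCycles (-1) 0 := by
    rw [← cancel_mono (C.iCycles 0), Category.assoc, C.toCycles_i, ← hf₀,
      homMkOfTwoTerm_f_zero]
  simp [hu]

lemma surjective_precomp_homology_neg_one_of_forall_homotopy_zero [Projective (σ.X (-1))]
    (hnull : ∀ f : σ ⟶ C, Nonempty (Homotopy f 0)) :
    Function.Surjective (fun φ : σ.X 0 ⟶ C.homology (-1) => σ.d (-1) 0 ≫ φ) := by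
  intro β
  obtain ⟨b, rfl⟩ : ∃ b, b ≫ C.homologyπ (-1) = β :=
    ⟨Projective.factorThru β _, Projective.factorThru_comp _ _⟩
  obtain ⟨h₀, h₁, hf₀, hf₁⟩ := (nonempty_homotopy_zero_iff_of_twoTerm hσ _).1
    (hnull (homMkOfTwoTerm hσ 0 (b ≫ C.iCycles (-1)) (by simp) (by simp)))
  simp only [homMkOfTwoTerm_f_zero, homMkOfTwoTerm_f_neg_one] at hf₀ hf₁
  let t := C.liftCycles h₀ 0 (by simp) hf₀.symm
  have hb : b = σ.d (-1) 0 ≫ t + h₁ ≫ C.toCycles (-2) (-1) := by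
    rw [← cancel_mono (C.iCycles (-1))]
    simp [t, hf₁]
  exact ⟨t ≫ C.homologyπ (-1), by simp [hb]⟩

lemma exists_comp_d_eq_f_zero [Projective (σ.X 0)]
    (hinj : Function.Injective (fun φ : σ.X 0 ⟶ C.homology 0 => σ.d (-1) 0 ≫ φ))
    (f : σ ⟶ C) : ∃ h : σ.X 0 ⟶ C.X (-1), h ≫ C.d (-1) 0 = f.f 0 := by
  let z := C.liftCycles (f.f 0) 1 (by simp) (by
    rw [f.comm, (hσ 1 (by omega) (by omega)).eq_of_tgt (σ.d 0 1) 0, zero_comp])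
  have hdz : σ.d (-1) 0 ≫ z = f.f (-1) ≫ C.toCycles (-1) 0 := by
    rw [← cancel_mono (C.iCycles 0)]
    simp [z]
  have hz : z ≫ C.homologyπ 0 = 0 := hinj (by simp [reassoc_of% hdz])
  obtain ⟨h, hh⟩ := exists_comp_toCycles_eq C (-1) 0 (by simp) z hz
  exact ⟨h, by rw [← C.toCycles_i, reassoc_of% hh, C.liftCycles_i]⟩

lemma nonempty_homotopy_zero_of_twoTerm [Projective (σ.X 0)] [Projective (σ.X (-1))]
    (hinj : Function.Injective (fun φ : σ.X 0 ⟶ C.homology 0 => σ.d (-1) 0 ≫ φ))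
    (hsurj : Function.Surjective (fun φ : σ.X 0 ⟶ C.homology (-1) => σ.d (-1) 0 ≫ φ))
    (f : σ ⟶ C) : Nonempty (Homotopy f 0) := by
  obtain ⟨h₀, hh₀⟩ := exists_comp_d_eq_f_zero hσ hinj f
  let g := C.liftCycles (f.f (-1) - σ.d (-1) 0 ≫ h₀) 0 (by simp) (by simp [f.comm, hh₀])
  obtain ⟨ψ, hψ⟩ := hsurj (g ≫ C.homologyπ (-1))
  obtain ⟨ψ', rfl⟩ : ∃ ψ', ψ' ≫ C.homologyπ (-1) = ψ :=
    ⟨Projective.factorThru ψ _, Projective.factorThru_comp _ _⟩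
  obtain ⟨h₁, hh₁⟩ :=
    exists_comp_toCycles_eq C (-2) (-1) (by simp) (g - σ.d (-1) 0 ≫ ψ')
      (by simpa [sub_eq_zero] using hψ.symm)
  refine (nonempty_homotopy_zero_iff_of_twoTerm hσ f).2
    ⟨h₀ + ψ' ≫ C.iCycles (-1), h₁, by simp [hh₀], ?_⟩
  rw [← C.toCycles_i (-2) (-1), reassoc_of% hh₁]
  simp [g]

lemma forall_nonempty_homotopy_zero_iff_of_twoTerm
    [Projective (σ.X 0)] [Projective (σ.X (-1))] :
    (∀ f : σ ⟶ C, Nonempty (Homotopy f 0)) ↔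
      Function.Injective (fun φ : σ.X 0 ⟶ C.homology 0 => σ.d (-1) 0 ≫ φ) ∧
        Function.Surjective (fun φ : σ.X 0 ⟶ C.homology (-1) => σ.d (-1) 0 ≫ φ) :=
  ⟨fun h => ⟨injective_precomp_homology_zero_of_forall_homotopy_zero hσ h,
      surjective_precomp_homology_neg_one_of_forall_homotopy_zero hσ h⟩,
    fun ⟨hinj, hsurj⟩ => nonempty_homotopy_zero_of_twoTerm hσ hinj hsurj⟩

end TwoTerm

section Derived

open DerivedCategory

variable {V : Type*} [Category V] [Abelian V]
  {σ : CochainComplex V ℤ} [∀ n, Projective (σ.X n)]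
  (hσ : ∀ n : ℤ, n ≠ -1 → n ≠ 0 → IsZero (σ.X n))
include hσ

lemma isKProjective_of_twoTerm : σ.IsKProjective :=
  have : σ.IsStrictlyLE 0 :=
    (σ.isStrictlyLE_iff 0).2 fun i hi => hσ i (by omega) (by omega)
  σ.isKProjective_of_projective 0

variable [HasDerivedCategory V]

lemma forall_Q_obj_hom_eq_zero_iff (Y : DerivedCategory V) :
    (∀ f : Q.obj σ ⟶ Y, f = 0) ↔
      Function.Injective (fun φ : σ.X 0 ⟶ (homologyFunctor V 0).obj Y => σ.d (-1) 0 ≫ φ) ∧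
        Function.Surjective
          (fun φ : σ.X 0 ⟶ (homologyFunctor V (-1)).obj Y => σ.d (-1) 0 ≫ φ) := by
  obtain ⟨K, ⟨e⟩⟩ : ∃ K, Nonempty (Q.obj K ≅ Y) := ⟨_, ⟨Q.objObjPreimageIso Y⟩⟩
  have := isKProjective_of_twoTerm hσ
  let hK (n : ℤ) : K.homology n ≅ (homologyFunctor V n).obj Y :=
    ((homologyFunctorFactors V n).app K).symm ≪≫ (homologyFunctor V n).mapIso e
  rw [precomp_eq_homCongr_comp _ (hK 0), precomp_eq_homCongr_comp _ (hK (-1))]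
  simp only [Equiv.comp_injective, Equiv.injective_comp, Equiv.comp_surjective,
    Equiv.surjective_comp]
  calc (∀ f : Q.obj σ ⟶ Y, f = 0)
      ↔ Subsingleton (Q.obj σ ⟶ Y) := (subsingleton_iff_forall_eq 0).symm
    _ ↔ Subsingleton ((HomotopyCategory.quotient V _).obj σ ⟶
          (HomotopyCategory.quotient V _).obj K) :=
        (((quotientCompQhIso V).app σ).homCongr ((quotientCompQhIso V).app K ≪≫ e)).symm.trans
          (Equiv.ofBijective _ (CochainComplex.IsKProjective.Qh_map_bijective σ _)).symm
          |>.subsingleton_congr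
    _ ↔ ∀ f : σ ⟶ K, (HomotopyCategory.quotient V _).map f = 0 :=
        (subsingleton_iff_forall_eq 0).trans (HomotopyCategory.quotient V _).map_surjective.forall
    _ ↔ _ := by
        simp only [HomotopyCategory.quotient_map_eq_zero_iff]
        exact forall_nonempty_homotopy_zero_iff_of_twoTerm hσ

lemma forall_Q_obj_hom_shift_eq_zero_iff (Z : DerivedCategory V) (n : ℤ) :
    (∀ f : Q.obj σ ⟶ Z⟦n⟧, f = 0) ↔
      Function.Injective (fun φ : σ.X 0 ⟶ (homologyFunctor V n).obj Z => σ.d (-1) 0 ≫ φ) ∧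
        Function.Surjective
          (fun φ : σ.X 0 ⟶ (homologyFunctor V (n - 1)).obj Z => σ.d (-1) 0 ≫ φ) := by
  let e (a a' : ℤ) (h : n + a = a') :
      (homologyFunctor V a).obj (Z⟦n⟧) ≅ (homologyFunctor V a').obj Z :=
    ((homologyFunctor V 0).shiftIso n a a' h).app Z
  rw [forall_Q_obj_hom_eq_zero_iff hσ, precomp_eq_homCongr_comp _ (e 0 n (add_zero n)),
    precomp_eq_homCongr_comp _ (e (-1) (n - 1) (by omega))]
  simp only [Equiv.comp_injective, Equiv.injective_comp, Equiv.comp_surjective,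
    Equiv.surjective_comp]

end Derived

lemma forall_pos_and_sub_one_iff (p q : ℤ → Prop) :
    (∀ i : ℤ, 0 < i → p i ∧ q (i - 1)) ↔ q 0 ∧ ∀ i : ℤ, 1 ≤ i → p i ∧ q i := by
  refine ⟨fun h => ⟨by simpa using (h 1 one_pos).2, fun i hi =>
      ⟨(h i hi).1, by simpa using (h (i + 1) (by omega)).2⟩⟩,
    fun ⟨h₀, h⟩ i hi => ⟨(h i hi).1, ?_⟩⟩
  obtain rfl | hi' : i = 1 ∨ 1 ≤ i - 1 := by omega
  · simpa using h₀
  · exact (h _ hi').2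

theorem perpGT_twoTerm_eq_general
    (σ : CochainComplex (ModuleCat.{u} R) ℤ) (hσ : TwoTermProj σ) :
    {Z : DerivedCategory (ModuleCat.{u} R) |
        ∀ i : ℤ, 0 < i → ∀ f : DerivedCategory.Q.obj σ ⟶ Z⟦i⟧, f = 0}
      = {Z : DerivedCategory (ModuleCat.{u} R) |
          (DerivedCategory.homologyFunctor (ModuleCat.{u} R) 0).obj Z ∈ Dclass σ ∧
          ∀ i : ℤ, 1 ≤ i →
            (DerivedCategory.homologyFunctor (ModuleCat.{u} R) i).obj Z ∈ Yclass σ} := by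
  have := hσ.1
  ext Z
  let H (i : ℤ) := (DerivedCategory.homologyFunctor (ModuleCat.{u} R) i).obj Z
  exact (forall₂_congr fun i _ => forall_Q_obj_hom_shift_eq_zero_iff hσ.2 Z i).trans
    (forall_pos_and_sub_one_iff
      (fun i => Function.Injective fun φ : σ.X 0 ⟶ H i => σ.d (-1) 0 ≫ φ)
      (fun i => Function.Surjective fun φ : σ.X 0 ⟶ H i => σ.d (-1) 0 ≫ φ))

/-- **Proposition 1.23**: for a 2-term complex of projectives `σ`, the class `σ^{⊥>0}`
in the derived category `D(R)` consists of the complexes `Z` with `H^0(Z) ∈ D_σ` and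
`H^i(Z) ∈ Y_σ` for all `i ≥ 1`. -/
theorem perpGT_twoTerm_eq
    (σ : CochainComplex (ModuleCat.{u} R) ℤ) (hσ : TwoTermProj σ)
    (T : ModuleCat.{u} R) (hT : Nonempty (σ.homology 0 ≅ T)) :
    {Z : DerivedCategory (ModuleCat.{u} R) |
        ∀ i : ℤ, 0 < i → ∀ f : DerivedCategory.Q.obj σ ⟶ Z⟦i⟧, f = 0}
      = {Z : DerivedCategory (ModuleCat.{u} R) |
          (DerivedCategory.homologyFunctor (ModuleCat.{u} R) 0).obj Z ∈ Dclass σ ∧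
          ∀ i : ℤ, 1 ≤ i →
            (DerivedCategory.homologyFunctor (ModuleCat.{u} R) i).obj Z ∈ Yclass σ} :=
  perpGT_twoTerm_eq_general σ hσ

end

end Glue
end

section
/- Let D be a triangulated category. (1) If A → B → C ⊕ D --α--> A[1] is a triangle in D and Hom_D(D, A[1]) = 0, then B ≅ B′ ⊕ D, where B′ is the cocone of the restriction α′ of α to C (i.e. B′ fits into a triangle A → B′ → C --α′--> A[1]). (2) Dually, if A --α--> B ⊕ C → D → A[1] is a triangle in D and Hom_D(A, C) = 0, then D ≅ D′ ⊕ C, where D′ is the cone of the map α′ : A → B induced by α. -/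
open CategoryTheory Limits Pretriangulated

universe v u u₁ u₂ u₃

namespace Glue

variable {C : Type u} [Category.{v} C] [Preadditive C]

/-!
Adding the contractible triangle `0 → D → D → 0` to the triangle `A → B' → C → A⟦1⟧` of `α'`
gives a distinguished triangle `A → B' ⊞ D → C ⊞ D → A⟦1⟧` whose third map is `α'` extended by
zero on `D`, which is `α` since `α` vanishes on `D`. Two distinguished triangles sharing the
map `α` have isomorphic cocones. Dually, in (2) the map `α` factors as `α' ≫ inl` since `α`
vanishes on `C`, and two distinguished triangles sharing `α` have isomorphic cones.
-/

noncomputable def biprodIsoPiBool {D : Type u} [Category.{v} D] [HasZeroMorphisms D]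
    [HasBinaryBiproducts D] (X : Bool → D) [HasProduct X] : X true ⊞ X false ≅ ∏ᶜ X where
  hom := Pi.lift fun
    | true => biprod.fst
    | false => biprod.snd
  inv := biprod.lift (Pi.π X true) (Pi.π X false)
  hom_inv_id := by ext <;> simp
  inv_hom_id := by ext ⟨_ | _⟩ <;> simp

section

open Category ZeroObject

variable {D : Type u} [Category.{v} D] [Preadditive D] [HasZeroObject D] [HasShift D ℤ]
  [∀ n : ℤ, (shiftFunctor D n).Additive] [Pretriangulated D] [HasBinaryBiproducts D]

lemma biprod_distinguished (T₁ T₂ : Triangle D) (hT₁ : T₁ ∈ distTriang D)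
    (hT₂ : T₂ ∈ distTriang D) :
    Triangle.mk (biprod.map T₁.mor₁ T₂.mor₁) (biprod.map T₁.mor₂ T₂.mor₂)
      (biprod.desc (T₁.mor₃ ≫ biprod.inl⟦(1 : ℤ)⟧') (T₂.mor₃ ≫ biprod.inr⟦(1 : ℤ)⟧')) ∈
        distTriang D := by
  let T : Bool → Triangle D := fun b => bif b then T₁ else T₂
  refine isomorphic_distinguished _
    (productTriangle_distinguished T (by rintro (_ | _) <;> assumption)) _
    (Triangle.isoMk _ _ (biprodIsoPiBool fun b => (T b).obj₁)
      (biprodIsoPiBool fun b => (T b).obj₂) (biprodIsoPiBool fun b => (T b).obj₃) ?_ ?_ ?_)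
  all_goals dsimp only [productTriangle, Triangle.mk]
  · ext ⟨_ | _⟩ <;> simp [biprodIsoPiBool, T]
  · ext ⟨_ | _⟩ <;> simp [biprodIsoPiBool, T]
  rw [← cancel_mono (piComparison _ _), assoc, assoc, assoc, IsIso.inv_hom_id, comp_id]
  ext ⟨_ | _⟩ <;> simp [biprodIsoPiBool, T, ← Functor.map_comp]

lemma biprod_inl_map_distinguished {A B C : D} {f : A ⟶ B} {g : B ⟶ C} {h : C ⟶ A⟦(1 : ℤ)⟧}
    (hT : Triangle.mk f g h ∈ distTriang D) (X : D) :
    Triangle.mk (f ≫ biprod.inl) (biprod.map g (𝟙 X)) (biprod.fst ≫ h) ∈ distTriang D := by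
  -- Restated so that the objects are `A ⊞ 0`, ... rather than projections of `Triangle.mk`,
  -- which `simp` cannot see through when matching biproduct instances.
  have hS : Triangle.mk (biprod.map f (0 : 0 ⟶ X)) (biprod.map g (𝟙 X))
      (biprod.desc (h ≫ biprod.inl⟦(1 : ℤ)⟧') (0 ≫ biprod.inr⟦(1 : ℤ)⟧')) ∈ distTriang D :=
    biprod_distinguished _ _ hT (contractible_distinguished₁ X)
  refine isomorphic_distinguished _ hS _
    (Triangle.isoMk _ _ (isoBiprodZero (isZero_zero D)) (Iso.refl _) (Iso.refl _) ?_ ?_ ?_)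
  all_goals dsimp only [Triangle.mk]
  · ext <;> simp [isoBiprodZero]
  · simp
  · ext <;> simp [isoBiprodZero]

lemma nonempty_iso_biprod_of_inr_comp_eq_zero {A B B' C₀ D₀ : D} {f : A ⟶ B}
    {g : B ⟶ C₀ ⊞ D₀} {α : C₀ ⊞ D₀ ⟶ A⟦(1 : ℤ)⟧} (hT : Triangle.mk f g α ∈ distTriang D)
    (hα : biprod.inr ≫ α = 0) {f' : A ⟶ B'} {g' : B' ⟶ C₀}
    (hT' : Triangle.mk f' g' (biprod.inl ≫ α) ∈ distTriang D) : Nonempty (B ≅ B' ⊞ D₀) := by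
  have hα' : biprod.fst ≫ biprod.inl ≫ α = α := by ext <;> simp [hα]
  have hT'' := biprod_inl_map_distinguished hT' D₀
  rw [hα'] at hT''
  obtain ⟨e, -⟩ := exists_iso_of_arrow_iso _ _ (inv_rot_of_distTriang _ hT)
    (inv_rot_of_distTriang _ hT'') (Iso.refl _)
  exact ⟨Triangle.π₃.mapIso e⟩

lemma nonempty_iso_biprod_of_comp_snd_eq_zero {A B C₀ D₀ D' : D} {α : A ⟶ B ⊞ C₀}
    {g : B ⊞ C₀ ⟶ D₀} {h : D₀ ⟶ A⟦(1 : ℤ)⟧} (hT : Triangle.mk α g h ∈ distTriang D)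
    (hα : α ≫ biprod.snd = 0) {g' : B ⟶ D'} {h' : D' ⟶ A⟦(1 : ℤ)⟧}
    (hT' : Triangle.mk (α ≫ biprod.fst) g' h' ∈ distTriang D) : Nonempty (D₀ ≅ D' ⊞ C₀) := by
  have hα' : (α ≫ biprod.fst) ≫ biprod.inl = α := by ext <;> simp [hα]
  have hT'' := biprod_inl_map_distinguished hT' C₀
  rw [hα'] at hT''
  obtain ⟨e, -⟩ := exists_iso_of_arrow_iso _ _ hT hT'' (Iso.refl _)
  exact ⟨Triangle.π₃.mapIso e⟩

end

/-- **Lemma 4.8**: splitting off direct summands from (co)cones in triangles. -/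
theorem triangle_biprod_splitting
    {D : Type u} [Category.{v} D] [Preadditive D] [HasZeroObject D] [HasShift D ℤ]
    [∀ n : ℤ, (shiftFunctor D n).Additive] [Pretriangulated D]
    [HasBinaryBiproducts D] :
    (∀ (A B C₀ D₀ : D) (f : A ⟶ B) (g : B ⟶ C₀ ⊞ D₀) (α : C₀ ⊞ D₀ ⟶ A⟦(1 : ℤ)⟧),
      Triangle.mk f g α ∈ (distTriang D) →
      (∀ φ : D₀ ⟶ A⟦(1 : ℤ)⟧, φ = 0) →
      ∀ (B' : D) (f' : A ⟶ B') (g' : B' ⟶ C₀),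
        Triangle.mk f' g' (biprod.inl ≫ α) ∈ (distTriang D) →
        Nonempty (B ≅ B' ⊞ D₀)) ∧
    (∀ (A B C₀ D₀ : D) (α : A ⟶ B ⊞ C₀) (g : B ⊞ C₀ ⟶ D₀) (h : D₀ ⟶ A⟦(1 : ℤ)⟧),
      Triangle.mk α g h ∈ (distTriang D) →
      (∀ φ : A ⟶ C₀, φ = 0) →
      ∀ (D' : D) (g' : B ⟶ D') (h' : D' ⟶ A⟦(1 : ℤ)⟧),
        Triangle.mk (α ≫ biprod.fst) g' h' ∈ (distTriang D) →
        Nonempty (D₀ ≅ D' ⊞ C₀)) :=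
  ⟨fun _ _ _ _ _ _ _ hT hD₀ _ _ _ hT' => nonempty_iso_biprod_of_inr_comp_eq_zero hT (hD₀ _) hT',
    fun _ _ _ _ _ _ _ hT hC₀ _ _ _ hT' => nonempty_iso_biprod_of_comp_snd_eq_zero hT (hC₀ _) hT'⟩

end Glue
end
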